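/- arXiv:1903.10094 — 2 statements merged into one kernel-verified Lean document; each statement's English description precedes it below -/
import Mathlib

section
/- Let 0 < ε ≤ 1, n ≥ 1, and let K be a function on {(u,v) ∈ ℝⁿ×ℝⁿ : u ≠ v} satisfying |K(u,v) − K(u′,v)| ≤ C₁|u−u′|^ε |u−v|^{−n−ε} whenever |u−u′| ≤ |u−v|/2. Let φ be a Schwartz function supported in the unit ball, and write φ_j(x) = 2^{jn}φ(2^j x). Then there is a constant C > 0 (depending only on n, ε, C₁ and φ) such that for all integers j ≥ j′ and all points x_Q, x_{Q′} ∈ ℝⁿ with |x_Q − x_{Q′}| ≥ 5·2^{−j′}: ∬ |φ_j(x_Q − u)| · |K(u,v) − K(x_Q,v)| · |φ_{j′}(v − x_{Q′})| du dv ≤ C 2^{−jε} / |x_Q − x_{Q′}|^{n+ε}. -/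
open MeasureTheory Filter Metric Set
open scoped ENNReal NNReal Topology FourierTransform

noncomputable section

/-- Euclidean space ℝⁿ. -/
abbrev Rn (n : ℕ) := EuclideanSpace ℝ (Fin n)

/-- Continuous dilation `ψ_t(x) = t^{-n} ψ(x/t)`. -/
def dil (n : ℕ) (t : ℝ) (g : Rn n → ℝ) : Rn n → ℝ := fun x => (t ^ n)⁻¹ * g (t⁻¹ • x)

/-- Dyadic dilation `ψ_k(x) = 2^{kn} ψ(2^k x)` for `k : ℤ`. -/
def ddil (n : ℕ) (k : ℤ) (g : Rn n → ℝ) : Rn n → ℝ :=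
  fun x => (2 : ℝ) ^ (k * (n : ℤ)) * g ((2 : ℝ) ^ k • x)

/-- Convolution `(g ∗ f)(x) = ∫ g(x-y) f(y) dy`. -/
def conv (n : ℕ) (g f : Rn n → ℝ) : Rn n → ℝ := fun x => ∫ y, g (x - y) * f y

/-- Partial derivative in the i-th coordinate direction. -/
def pd (n : ℕ) (i : Fin n) (f : Rn n → ℝ) : Rn n → ℝ :=
  fun x => fderiv ℝ f x (EuclideanSpace.single i 1)

/-- Multi-index partial derivative `∂^α`. -/
def pdM (n : ℕ) (α : Fin n → ℕ) (f : Rn n → ℝ) : Rn n → ℝ :=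
  ((List.ofFn fun i : Fin n => (pd n i)^[α i]).foldr (· ∘ ·) id) f

/-- The monomial `x^α`. -/
def monomial (n : ℕ) (α : Fin n → ℕ) (x : Rn n) : ℝ := ∏ i, x i ^ α i

/-- Vanishing moments `∫ g(x) x^α dx = 0` for all `|α| ≤ M`. -/
def momentsVanish (n : ℕ) (g : Rn n → ℝ) (M : ℕ) : Prop :=
  ∀ α : Fin n → ℕ, (∑ i, α i) ≤ M → (∫ x, g x * monomial n α x) = 0

/-- The finset of multi-indices of order at most `M`. -/
def multiIdx (n M : ℕ) : Finset (Fin n → ℕ) :=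
  (Fintype.piFinset fun _ : Fin n => Finset.range (M + 1)).filter fun α => ∑ i, α i ≤ M

/-- The family `𝓕_{N₀}` of normalized test functions. -/
def FN (n N₀ : ℕ) : Set (SchwartzMap (Rn n) ℝ) :=
  {ψ | (∫ x, ψ x) = 1 ∧
    ∑ α ∈ multiIdx n N₀, ⨆ x : Rn n, (1 + ‖x‖) ^ N₀ * |pdM n α (⇑ψ) x| ≤ 1}

/-- The grand maximal function `𝓜f(x) = sup{|ψ_t∗f(x)| : t > 0, ψ ∈ 𝓕_{N₀}}`. -/
def grandMax (n N₀ : ℕ) (f : Rn n → ℝ) (x : Rn n) : ℝ≥0∞ :=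
  ⨆ (ψ : SchwartzMap (Rn n) ℝ) (_ : ψ ∈ FN n N₀) (t : ℝ) (_ : 0 < t),
    (‖conv n (dil n t ⇑ψ) f x‖₊ : ℝ≥0∞)

/-- The variable exponent Lebesgue quasi-norm (of an `ℝ≥0∞`-valued function). -/
def varNorm (n : ℕ) (p : Rn n → ℝ) (f : Rn n → ℝ≥0∞) : ℝ≥0∞ :=
  sInf {lam : ℝ≥0∞ | 0 < lam ∧ (∫⁻ x, (f x / lam) ^ p x) ≤ 1}

/-- The variable exponent Lebesgue quasi-norm of a real function. -/
def varNormF (n : ℕ) (p : Rn n → ℝ) (f : Rn n → ℝ) : ℝ≥0∞ :=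
  varNorm n p fun x => (‖f x‖₊ : ℝ≥0∞)

/-- The variable Hardy space quasi-norm `‖f‖_{H^{p(·)}} = ‖𝓜f‖_{L^{p(·)}}`. -/
def hpNorm (n N₀ : ℕ) (p : Rn n → ℝ) (f : Rn n → ℝ) : ℝ≥0∞ :=
  varNorm n p (grandMax n N₀ f)

/-- Global log-Hölder continuity. -/
def LogHolder (n : ℕ) (p : Rn n → ℝ) : Prop :=
  ∃ C₀ : ℝ, 0 < C₀ ∧
    (∀ x y : Rn n, ‖x - y‖ ≤ 1 / 2 → |p x - p y| ≤ C₀ / (-Real.log ‖x - y‖)) ∧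
    (∀ x y : Rn n, ‖x‖ ≤ ‖y‖ → |p x - p y| ≤ C₀ / Real.log (Real.exp 1 + ‖x‖))

/-- The closed cube with lower corner `a` and side length `r`. -/
def cube (n : ℕ) (a : Rn n) (r : ℝ) : Set (Rn n) :=
  {x | ∀ i, a i ≤ x i ∧ x i ≤ a i + r}

/-- The BMO norm `sup_Q |Q|⁻¹ ∫_Q |b - b_Q|`. -/
def bmoNorm (n : ℕ) (b : Rn n → ℝ) : ℝ≥0∞ :=
  ⨆ (a : Rn n) (r : ℝ) (_ : 0 < r),
    (∫⁻ x in cube n a r, (‖b x - ⨍ y in cube n a r, b y‖₊ : ℝ≥0∞)) / ENNReal.ofReal (r ^ n)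

/-- `b ∈ BMO(ℝⁿ)`. -/
def MemBMO (n : ℕ) (b : Rn n → ℝ) : Prop :=
  LocallyIntegrable b volume ∧ bmoNorm n b < ⊤

/-- The (uncentered) Hardy–Littlewood maximal operator over cubes. -/
def hlMax (n : ℕ) (f : Rn n → ℝ) (x : Rn n) : ℝ≥0∞ :=
  ⨆ (a : Rn n) (r : ℝ) (_ : 0 < r) (_ : x ∈ cube n a r),
    (∫⁻ y in cube n a r, (‖f y‖₊ : ℝ≥0∞)) / ENNReal.ofReal (r ^ n)

/-- The half-open dyadic cube of generation `m` indexed by `v ∈ ℤⁿ`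
(side length `2^{-m}`, lower corner `2^{-m} v`). -/
def dcube (n : ℕ) (m : ℤ) (v : Fin n → ℤ) : Set (Rn n) :=
  {x | ∀ i, (v i : ℝ) * (2 : ℝ) ^ (-m) ≤ x i ∧ x i < ((v i : ℝ) + 1) * (2 : ℝ) ^ (-m)}

/-- The discrete para-product operator `π_b`. -/
def paraProduct (n N : ℕ) (φ φt ϕ : Rn n → ℝ) (xQ : ℤ → (Fin n → ℤ) → Rn n)
    (b f : Rn n → ℝ) : Rn n → ℝ := fun x =>
  ∑' (k : ℤ) (v : Fin n → ℤ),
    (2 : ℝ) ^ (-(k + (N : ℤ)) * (n : ℤ)) * ddil n k φ (x - xQ k v) *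
      conv n (ddil n k φt) b (xQ k v) * conv n (ddil n k ϕ) f (xQ k v)

/-- `L²(ℝⁿ)`. -/
abbrev Lp2 (n : ℕ) := Lp ℝ 2 (volume : Measure (Rn n))

/-- Littlewood–Paley condition `Σ_j |φ̂(2^{-j}ξ)|² = 1` for `ξ ≠ 0`. -/
def LPcond (n : ℕ) (φ : Rn n → ℝ) : Prop :=
  ∀ ξ : Rn n, ξ ≠ 0 → ∑' j : ℤ, ‖𝓕 (fun x => (φ x : ℂ)) ((2 : ℝ) ^ (-j) • ξ)‖ ^ 2 = 1

/-- Standard Calderón–Zygmund kernel estimates with regularity `ε`. -/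
def IsCZKernel (n : ℕ) (ε : ℝ) (K : Rn n → Rn n → ℝ) (C₁ : ℝ) : Prop :=
  (∀ x y : Rn n, x ≠ y → |K x y| ≤ C₁ / ‖x - y‖ ^ n) ∧
  (∀ x x' y : Rn n, x ≠ y → ‖x - x'‖ ≤ ‖x - y‖ / 2 →
    |K x y - K x' y| ≤ C₁ * ‖x - x'‖ ^ ε / ‖x - y‖ ^ ((n : ℝ) + ε)) ∧
  (∀ x y y' : Rn n, x ≠ y → ‖y - y'‖ ≤ ‖x - y‖ / 2 →
    |K x y - K x y'| ≤ C₁ * ‖y - y'‖ ^ ε / ‖x - y‖ ^ ((n : ℝ) + ε))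

/-- Higher order Calderón–Zygmund kernel estimates (class `CZO(N,ε)`). -/
def IsCZKernelN (n N : ℕ) (ε : ℝ) (K : Rn n → Rn n → ℝ) (C₁ : ℝ) : Prop :=
  (∀ α : Fin n → ℕ, (∑ i, α i) ≤ N → ∀ x y : Rn n, x ≠ y →
    |pdM n α (fun u => K u y) x| + |pdM n α (fun v => K x v) y| ≤
      C₁ / ‖x - y‖ ^ ((n : ℝ) + (∑ i, α i : ℕ))) ∧
  (∀ α : Fin n → ℕ, (∑ i, α i) = N → ∀ x x' y : Rn n, x ≠ y → ‖x - x'‖ ≤ ‖x - y‖ / 2 →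
    |pdM n α (fun u => K u y) x - pdM n α (fun u => K u y) x'| ≤
      C₁ * ‖x - x'‖ ^ ε / ‖x - y‖ ^ ((n : ℝ) + N + ε)) ∧
  (∀ α : Fin n → ℕ, (∑ i, α i) = N → ∀ x y y' : Rn n, x ≠ y → ‖y - y'‖ ≤ ‖x - y‖ / 2 →
    |pdM n α (fun v => K x v) y - pdM n α (fun v => K x v) y'| ≤
      C₁ * ‖y - y'‖ ^ ε / ‖x - y‖ ^ ((n : ℝ) + N + ε))

/-- `T` is represented by the kernel `K` off the diagonal. -/
def RepresentsKernel (n : ℕ) (T : Lp2 n →L[ℝ] Lp2 n) (K : Rn n → Rn n → ℝ) : Prop :=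
  ∀ f g : Rn n → ℝ, ContDiff ℝ (⊤ : ℕ∞) f → HasCompactSupport f →
    ContDiff ℝ (⊤ : ℕ∞) g → HasCompactSupport g → Disjoint (tsupport f) (tsupport g) →
    ∀ hf : MemLp f 2 volume,
      (∫ x, (T (hf.toLp f) : Rn n → ℝ) x * g x) = ∫ x, (∫ y, K x y * f y) * g x

/-- `T ∈ CZO(ε)`: a bounded operator on `L²` with a standard kernel. -/
def IsCZO (n : ℕ) (ε : ℝ) (T : Lp2 n →L[ℝ] Lp2 n) : Prop :=
  ∃ K C₁, IsCZKernel n ε K C₁ ∧ RepresentsKernel n T K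

/-- `T ∈ CZO(N,ε)`: the kernel additionally satisfies the higher order estimates. -/
def IsCZON (n N : ℕ) (ε : ℝ) (T : Lp2 n →L[ℝ] Lp2 n) : Prop :=
  ∃ K C₁, IsCZKernel n ε K C₁ ∧ IsCZKernelN n N ε K C₁ ∧ RepresentsKernel n T K

/-- `T∗1 = 0`: `∫ Tη = 0` for every smooth compactly supported `η` with `∫ η = 0`. -/
def TstarOneZero (n : ℕ) (T : Lp2 n →L[ℝ] Lp2 n) : Prop :=
  ∀ η : Rn n → ℝ, ContDiff ℝ (⊤ : ℕ∞) η → HasCompactSupport η → (∫ x, η x) = 0 →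
    ∀ hη : MemLp η 2 volume,
      Integrable (T (hη.toLp η) : Rn n → ℝ) volume ∧
      (∫ x, (T (hη.toLp η) : Rn n → ℝ) x) = 0

/-- `T1 = 0`, i.e. `(T^∗)∗1 = 0` for the `L²` adjoint `T^∗`. -/
def TOneZero (n : ℕ) (T : Lp2 n →L[ℝ] Lp2 n) : Prop :=
  TstarOneZero n (ContinuousLinearMap.adjoint T)

/-- `T∗(x^β) = 0` tested against bounded, compactly supported functions with
vanishing moments up to order `N`. -/
def TstarMomZero (n : ℕ) (T : Lp2 n →L[ℝ] Lp2 n) (β : Fin n → ℕ) (N : ℕ) : Prop :=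
  ∀ η : Rn n → ℝ, Measurable η → (∃ B, ∀ x, |η x| ≤ B) → HasCompactSupport η →
    momentsVanish n η N →
    ∀ hη : MemLp η 2 volume,
      Integrable (fun x => monomial n β x * (T (hη.toLp η) : Rn n → ℝ) x) volume ∧
      (∫ x, monomial n β x * (T (hη.toLp η) : Rn n → ℝ) x) = 0

/-- `a` is a `(p(·),q)`-atom supported on the cube with corner `c` and side `r`. -/
def IsPAtom (n : ℕ) (p : Rn n → ℝ) (q : ℝ) (d : ℕ) (a : Rn n → ℝ) (c : Rn n) (r : ℝ) : Prop :=
  tsupport a ⊆ cube n c r ∧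
  eLpNorm a (ENNReal.ofReal q) volume ≤
    ENNReal.ofReal (r ^ n) ^ (1 / q) / varNorm n p ((cube n c r).indicator fun _ => (1 : ℝ≥0∞)) ∧
  momentsVanish n a d

/-- The minimal admissible degree `d_{p(·)}`. -/
def dExp (n : ℕ) (p : Rn n → ℝ) : ℕ :=
  sInf {d : ℕ | (n : ℝ) < essInf p volume * ((n : ℝ) + d + 1)}

/-- The atomic coefficient functional `𝒜({λ_j},{Q_j})`. -/
def atomicA (n : ℕ) (p : Rn n → ℝ) (lam : ℕ → ℝ) (c : ℕ → Rn n) (r : ℕ → ℝ) : ℝ≥0∞ :=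
  varNorm n p fun x =>
    (∑' j : ℕ, (((‖lam j‖₊ : ℝ≥0∞) * (cube n (c j) (r j)).indicator (fun _ => (1 : ℝ≥0∞)) x) /
        varNorm n p ((cube n (c j) (r j)).indicator fun _ => (1 : ℝ≥0∞))) ^ essInf p volume) ^
      (1 / essInf p volume)

end
lemma lintegral_abs_ddil_le (n : ℕ) (j : ℤ) (g : Rn n → ℝ) (Cg : ℝ)
    (hb : ∀ x, |g x| ≤ Cg) (hs : tsupport g ⊆ Metric.closedBall 0 1) (c : Rn n) :
    ∫⁻ u, ENNReal.ofReal |ddil n j g (c - u)| ≤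
      ENNReal.ofReal Cg * volume (Metric.closedBall (0 : Rn n) 1) := by
  have hCg : 0 ≤ Cg := le_trans (abs_nonneg _) (hb 0)
  have hpow : (0:ℝ) < (2:ℝ) ^ (j * (n:ℤ)) := zpow_pos two_pos _
  have hpt : ∀ u, ENNReal.ofReal |ddil n j g (c - u)| ≤
      (Metric.closedBall c ((2:ℝ) ^ (-j))).indicator
        (fun _ => ENNReal.ofReal ((2:ℝ) ^ (j * (n:ℤ)) * Cg)) u := by
    intro u
    by_cases hu : u ∈ Metric.closedBall c ((2:ℝ) ^ (-j))
    · rw [Set.indicator_of_mem hu]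
      apply ENNReal.ofReal_le_ofReal
      show |(2 : ℝ) ^ (j * (n : ℤ)) * g ((2 : ℝ) ^ j • (c - u))| ≤ _
      rw [abs_mul, abs_of_pos hpow]
      exact mul_le_mul_of_nonneg_left (hb _) hpow.le
    · rw [Set.indicator_of_notMem hu]
      have hz : g ((2:ℝ) ^ j • (c - u)) = 0 := by
        apply image_eq_zero_of_notMem_tsupport
        intro hmem
        apply hu
        have h1 := hs hmem
        rw [mem_closedBall_zero_iff, norm_smul] at h1
        have h2 : ‖(2:ℝ)^j‖ = (2:ℝ)^j := by
          rw [Real.norm_eq_abs, abs_of_pos (zpow_pos two_pos _)]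
        rw [h2] at h1
        have hp : (0:ℝ) < (2:ℝ)^j := zpow_pos two_pos j
        have h3 : ‖c - u‖ ≤ ((2:ℝ)^j)⁻¹ := by
          rw [inv_eq_one_div, le_div_iff₀ hp]
          linarith [mul_comm ((2:ℝ)^j) ‖c - u‖]
        rw [Metric.mem_closedBall, dist_eq_norm, ← norm_sub_rev, zpow_neg]
        exact h3
      show ENNReal.ofReal |(2 : ℝ) ^ (j * (n : ℤ)) * g ((2 : ℝ) ^ j • (c - u))| ≤ 0
      rw [hz, mul_zero, abs_zero, ENNReal.ofReal_zero]
  calc ∫⁻ u, ENNReal.ofReal |ddil n j g (c - u)|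
      ≤ ∫⁻ u, (Metric.closedBall c ((2:ℝ) ^ (-j))).indicator
        (fun _ => ENNReal.ofReal ((2:ℝ) ^ (j * (n:ℤ)) * Cg)) u := lintegral_mono hpt
    _ = ENNReal.ofReal ((2:ℝ) ^ (j * (n:ℤ)) * Cg) * volume (Metric.closedBall c ((2:ℝ) ^ (-j))) := by
        rw [lintegral_indicator measurableSet_closedBall, setLIntegral_const]
    _ = ENNReal.ofReal ((2:ℝ) ^ (j * (n:ℤ)) * Cg) *
        (ENNReal.ofReal (((2:ℝ) ^ (-j)) ^ (n:ℕ)) * volume (Metric.closedBall (0 : Rn n) 1)) := by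
        rw [Measure.addHaar_closedBall' volume c (by positivity), finrank_euclideanSpace_fin]
    _ = ENNReal.ofReal Cg * volume (Metric.closedBall (0 : Rn n) 1) := by
        rw [← mul_assoc, ← ENNReal.ofReal_mul (by positivity)]
        congr 2
        have e1 : ((2:ℝ)^(-j))^(n:ℕ) = (2:ℝ)^((-j) * (n:ℤ)) := by
          rw [← zpow_natCast ((2:ℝ)^(-j)) n, ← zpow_mul]
        have e2 : (2:ℝ)^(j*(n:ℤ)) * (2:ℝ)^((-j)*(n:ℤ)) = 1 := by
          rw [← zpow_add₀ (two_ne_zero : (2:ℝ) ≠ 0)]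
          norm_num
        calc (2:ℝ) ^ (j * (n:ℤ)) * Cg * ((2:ℝ)^(-j))^(n:ℕ)
            = (2:ℝ)^(j*(n:ℤ)) * (2:ℝ)^((-j)*(n:ℤ)) * Cg := by rw [e1]; ring
          _ = Cg := by rw [e2, one_mul]

lemma lintegral_abs_ddil_le' (n : ℕ) (j : ℤ) (g : Rn n → ℝ) (Cg : ℝ)
    (hb : ∀ x, |g x| ≤ Cg) (hs : tsupport g ⊆ Metric.closedBall 0 1) (c : Rn n) :
    ∫⁻ u, ENNReal.ofReal |ddil n j g (u - c)| ≤
      ENNReal.ofReal Cg * volume (Metric.closedBall (0 : Rn n) 1) := by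
  have hCg : 0 ≤ Cg := le_trans (abs_nonneg _) (hb 0)
  have hpow : (0:ℝ) < (2:ℝ) ^ (j * (n:ℤ)) := zpow_pos two_pos _
  have hpt : ∀ u, ENNReal.ofReal |ddil n j g (u - c)| ≤
      (Metric.closedBall c ((2:ℝ) ^ (-j))).indicator
        (fun _ => ENNReal.ofReal ((2:ℝ) ^ (j * (n:ℤ)) * Cg)) u := by
    intro u
    by_cases hu : u ∈ Metric.closedBall c ((2:ℝ) ^ (-j))
    · rw [Set.indicator_of_mem hu]
      apply ENNReal.ofReal_le_ofReal
      show |(2 : ℝ) ^ (j * (n : ℤ)) * g ((2 : ℝ) ^ j • (u - c))| ≤ _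
      rw [abs_mul, abs_of_pos hpow]
      exact mul_le_mul_of_nonneg_left (hb _) hpow.le
    · rw [Set.indicator_of_notMem hu]
      have hz : g ((2:ℝ) ^ j • (u - c)) = 0 := by
        apply image_eq_zero_of_notMem_tsupport
        intro hmem
        apply hu
        have h1 := hs hmem
        rw [mem_closedBall_zero_iff, norm_smul] at h1
        have h2 : ‖(2:ℝ)^j‖ = (2:ℝ)^j := by
          rw [Real.norm_eq_abs, abs_of_pos (zpow_pos two_pos _)]
        rw [h2] at h1
        have hp : (0:ℝ) < (2:ℝ)^j := zpow_pos two_pos j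
        have h3 : ‖u - c‖ ≤ ((2:ℝ)^j)⁻¹ := by
          rw [inv_eq_one_div, le_div_iff₀ hp]
          linarith [mul_comm ((2:ℝ)^j) ‖u - c‖]
        rw [Metric.mem_closedBall, dist_eq_norm, zpow_neg]
        exact h3
      show ENNReal.ofReal |(2 : ℝ) ^ (j * (n : ℤ)) * g ((2 : ℝ) ^ j • (u - c))| ≤ 0
      rw [hz, mul_zero, abs_zero, ENNReal.ofReal_zero]
  calc ∫⁻ u, ENNReal.ofReal |ddil n j g (u - c)|
      ≤ ∫⁻ u, (Metric.closedBall c ((2:ℝ) ^ (-j))).indicator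
        (fun _ => ENNReal.ofReal ((2:ℝ) ^ (j * (n:ℤ)) * Cg)) u := lintegral_mono hpt
    _ = ENNReal.ofReal ((2:ℝ) ^ (j * (n:ℤ)) * Cg) * volume (Metric.closedBall c ((2:ℝ) ^ (-j))) := by
        rw [lintegral_indicator measurableSet_closedBall, setLIntegral_const]
    _ = ENNReal.ofReal ((2:ℝ) ^ (j * (n:ℤ)) * Cg) *
        (ENNReal.ofReal (((2:ℝ) ^ (-j)) ^ (n:ℕ)) * volume (Metric.closedBall (0 : Rn n) 1)) := by
        rw [Measure.addHaar_closedBall' volume c (by positivity), finrank_euclideanSpace_fin]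
    _ = ENNReal.ofReal Cg * volume (Metric.closedBall (0 : Rn n) 1) := by
        rw [← mul_assoc, ← ENNReal.ofReal_mul (by positivity)]
        congr 2
        have e1 : ((2:ℝ)^(-j))^(n:ℕ) = (2:ℝ)^((-j) * (n:ℤ)) := by
          rw [← zpow_natCast ((2:ℝ)^(-j)) n, ← zpow_mul]
        have e2 : (2:ℝ)^(j*(n:ℤ)) * (2:ℝ)^((-j)*(n:ℤ)) = 1 := by
          rw [← zpow_add₀ (two_ne_zero : (2:ℝ) ≠ 0)]
          norm_num
        calc (2:ℝ) ^ (j * (n:ℤ)) * Cg * ((2:ℝ)^(-j))^(n:ℕ)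
            = (2:ℝ)^(j*(n:ℤ)) * (2:ℝ)^((-j)*(n:ℤ)) * Cg := by rw [e1]; ring
          _ = Cg := by rw [e2, one_mul]

lemma ddil_support_norm_le (n : ℕ) (k : ℤ) (g : Rn n → ℝ)
    (hs : tsupport g ⊆ Metric.closedBall 0 1) (y : Rn n) (h : ddil n k g y ≠ 0) :
    ‖y‖ ≤ (2:ℝ)^(-k) := by
  have hg : g ((2:ℝ)^k • y) ≠ 0 := by
    intro h0
    apply h
    show (2:ℝ)^(k*(n:ℤ)) * g ((2:ℝ)^k • y) = 0
    rw [h0, mul_zero]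
  have hmem := hs (subset_tsupport _ (by simpa [Function.mem_support] using hg))
  rw [mem_closedBall_zero_iff, norm_smul, Real.norm_eq_abs,
    abs_of_pos (zpow_pos two_pos _)] at hmem
  rw [zpow_neg, inv_eq_one_div, le_div_iff₀ (zpow_pos two_pos k)]
  linarith [mul_comm ((2:ℝ)^k) ‖y‖]

/-- Case (2) estimate — for `j ≥ j'` and `|x_Q - x_{Q'}| ≥ 5·2^{-j'}`,
`∬ |φ_j(x_Q-u)| |K(u,v)-K(x_Q,v)| |φ_{j'}(v-x_{Q'})| du dv ≤ C 2^{-jε}/|x_Q-x_{Q'}|^{n+ε}`. -/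
theorem czo_kernel_far_estimate
    (n : ℕ) (hn : 1 ≤ n) (ε : ℝ) (hε0 : 0 < ε) (hε1 : ε ≤ 1) (C₁ : ℝ)
    (K : Rn n → Rn n → ℝ)
    (hK : ∀ u u' v : Rn n, u ≠ v → ‖u - u'‖ ≤ ‖u - v‖ / 2 →
      |K u v - K u' v| ≤ C₁ * ‖u - u'‖ ^ ε / ‖u - v‖ ^ ((n : ℝ) + ε))
    (φ : SchwartzMap (Rn n) ℝ) (hφ : tsupport ⇑φ ⊆ Metric.closedBall 0 1) :
    ∃ C : ℝ, 0 < C ∧ ∀ j j' : ℤ, j' ≤ j → ∀ xQ xQ' : Rn n,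
      5 * (2 : ℝ) ^ (-j') ≤ ‖xQ - xQ'‖ →
      (∫⁻ u, ∫⁻ v, ENNReal.ofReal
          (|ddil n j ⇑φ (xQ - u)| * |K u v - K xQ v| * |ddil n j' ⇑φ (v - xQ')|)) ≤
        ENNReal.ofReal (C * (2 : ℝ) ^ (-(j : ℝ) * ε) / ‖xQ - xQ'‖ ^ ((n : ℝ) + ε)) := by
  set Cφ := ((SchwartzMap.seminorm ℝ 0 0) φ : ℝ) with hCφdef
  have hCφ : ∀ x, |φ x| ≤ Cφ := fun x => by
    simpa [Real.norm_eq_abs] using SchwartzMap.norm_le_seminorm ℝ φ x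
  have hCφ0 : 0 ≤ Cφ := le_trans (abs_nonneg _) (hCφ 0)
  set μB := volume (Metric.closedBall (0 : Rn n) 1) with hμBdef
  have hμB : μB ≠ ⊤ := measure_closedBall_lt_top.ne
  set V := μB.toReal with hVdef
  have hV0 : 0 ≤ V := ENNReal.toReal_nonneg
  have hμBV : μB = ENNReal.ofReal V := (ENNReal.ofReal_toReal hμB).symm
  set W := Cφ * V with hWdef
  have hW0 : 0 ≤ W := mul_nonneg hCφ0 hV0
  set C₁' := max C₁ 0 with hC₁'def
  have hC₁'0 : 0 ≤ C₁' := le_max_right _ _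
  set q := (n:ℝ) + ε with hqdef
  have hq0 : 0 < q := by positivity
  refine ⟨(C₁' + 1) * (5/4:ℝ) ^ q * (W + 1)^2, by positivity, ?_⟩
  intro j j' hjj' xQ xQ' hD
  set D := ‖xQ - xQ'‖ with hDdef
  have h2j' : (0:ℝ) < (2:ℝ)^(-j') := zpow_pos two_pos _
  have h2j : (0:ℝ) < (2:ℝ)^(-j) := zpow_pos two_pos _
  have hD0 : 0 < D := lt_of_lt_of_le (by positivity) hD
  have hj5 : (2:ℝ)^(-j') ≤ D/5 := by linarith
  have hjj : (2:ℝ)^(-j) ≤ (2:ℝ)^(-j') := zpow_le_zpow_right₀ one_le_two (neg_le_neg hjj')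
  set P := (2:ℝ) ^ (-(j:ℝ) * ε) with hPdef
  have hP0 : 0 < P := Real.rpow_pos_of_pos two_pos _
  have hPe : ((2:ℝ)^(-j)) ^ ε = P := by
    rw [hPdef, ← Real.rpow_intCast 2 (-j), ← Real.rpow_mul (by norm_num)]
    congr 1
    push_cast
    ring
  set B := C₁' * P / ((4/5*D) ^ q) with hBdef
  have hden0 : (0:ℝ) < (4/5*D)^q := Real.rpow_pos_of_pos (by linarith) _
  have hB0 : 0 ≤ B := by positivity
  have key : ∀ u v, ENNReal.ofReal
      (|ddil n j ⇑φ (xQ - u)| * |K u v - K xQ v| * |ddil n j' ⇑φ (v - xQ')|)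
      ≤ ENNReal.ofReal |ddil n j ⇑φ (xQ - u)| *
        (ENNReal.ofReal B * ENNReal.ofReal |ddil n j' ⇑φ (v - xQ')|) := by
    intro u v
    by_cases hFu : ddil n j ⇑φ (xQ - u) = 0
    · simp [hFu]
    by_cases hGv : ddil n j' ⇑φ (v - xQ') = 0
    · simp [hGv]
    have hu : ‖xQ - u‖ ≤ (2:ℝ)^(-j) := ddil_support_norm_le n j ⇑φ hφ _ hFu
    have hv : ‖v - xQ'‖ ≤ (2:ℝ)^(-j') := ddil_support_norm_le n j' ⇑φ hφ _ hGv
    have hxv : (4/5) * D ≤ ‖xQ - v‖ := by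
      have h4 : ‖xQ - xQ'‖ - ‖v - xQ'‖ ≤ ‖(xQ - xQ') - (v - xQ')‖ := norm_sub_norm_le _ _
      have h5 : (xQ - xQ') - (v - xQ') = xQ - v := by abel
      rw [h5] at h4
      have : ‖v - xQ'‖ ≤ D/5 := le_trans hv hj5
      rw [← hDdef] at h4
      linarith
    have hne : xQ ≠ v := by
      have hpos : (0:ℝ) < ‖xQ - v‖ := lt_of_lt_of_le (by linarith) hxv
      intro h
      rw [h, sub_self, norm_zero] at hpos
      exact lt_irrefl _ hpos
    have hhalf : ‖xQ - u‖ ≤ ‖xQ - v‖ / 2 := by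
      have : (2:ℝ)^(-j) ≤ D/5 := le_trans hjj hj5
      linarith
    have hKb := hK xQ u v hne hhalf
    have hKB : |K u v - K xQ v| ≤ B := by
      rw [abs_sub_comm]
      calc |K xQ v - K u v| ≤ C₁ * ‖xQ - u‖ ^ ε / ‖xQ - v‖ ^ ((n:ℝ) + ε) := hKb
        _ ≤ C₁' * P / ((4/5*D) ^ q) := by
            rw [← hqdef]
            apply div_le_div₀ (by positivity) ?_ hden0
              (Real.rpow_le_rpow (by linarith) hxv hq0.le)
            calc C₁ * ‖xQ - u‖ ^ ε ≤ C₁' * ‖xQ - u‖ ^ ε :=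
                  mul_le_mul_of_nonneg_right (le_max_left _ _)
                    (Real.rpow_nonneg (norm_nonneg _) _)
              _ ≤ C₁' * P := by
                  apply mul_le_mul_of_nonneg_left _ hC₁'0
                  rw [← hPe]
                  exact Real.rpow_le_rpow (norm_nonneg _) hu hε0.le
        _ = B := hBdef.symm
    rw [← ENNReal.ofReal_mul hB0, ← ENNReal.ofReal_mul (abs_nonneg _)]
    apply ENNReal.ofReal_le_ofReal
    have h1 : |ddil n j ⇑φ (xQ - u)| * |K u v - K xQ v| ≤ |ddil n j ⇑φ (xQ - u)| * B :=
      mul_le_mul_of_nonneg_left hKB (abs_nonneg _)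
    calc |ddil n j ⇑φ (xQ - u)| * |K u v - K xQ v| * |ddil n j' ⇑φ (v - xQ')|
        ≤ |ddil n j ⇑φ (xQ - u)| * B * |ddil n j' ⇑φ (v - xQ')| :=
          mul_le_mul_of_nonneg_right h1 (abs_nonneg _)
      _ = |ddil n j ⇑φ (xQ - u)| * (B * |ddil n j' ⇑φ (v - xQ')|) := by ring
  set IG := ∫⁻ v, ENNReal.ofReal |ddil n j' ⇑φ (v - xQ')| with hIGdef
  have hIG : IG ≤ ENNReal.ofReal Cφ * μB := lintegral_abs_ddil_le' n j' ⇑φ Cφ hCφ hφ xQ'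
  have hIGtop : IG ≠ ⊤ :=
    ne_top_of_le_ne_top (ENNReal.mul_ne_top ENNReal.ofReal_ne_top hμB) hIG
  have hIF : (∫⁻ u, ENNReal.ofReal |ddil n j ⇑φ (xQ - u)|) ≤ ENNReal.ofReal Cφ * μB :=
    lintegral_abs_ddil_le n j ⇑φ Cφ hCφ hφ xQ
  calc (∫⁻ u, ∫⁻ v, ENNReal.ofReal
          (|ddil n j ⇑φ (xQ - u)| * |K u v - K xQ v| * |ddil n j' ⇑φ (v - xQ')|))
      ≤ ∫⁻ u, ∫⁻ v, ENNReal.ofReal |ddil n j ⇑φ (xQ - u)| *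
          (ENNReal.ofReal B * ENNReal.ofReal |ddil n j' ⇑φ (v - xQ')|) :=
        lintegral_mono fun u => lintegral_mono fun v => key u v
    _ = ∫⁻ u, ENNReal.ofReal |ddil n j ⇑φ (xQ - u)| * (ENNReal.ofReal B * IG) := by
        refine lintegral_congr fun u => ?_
        simp_rw [← mul_assoc]
        rw [lintegral_const_mul' _ _
          (ENNReal.mul_ne_top ENNReal.ofReal_ne_top ENNReal.ofReal_ne_top), mul_assoc]
    _ = (∫⁻ u, ENNReal.ofReal |ddil n j ⇑φ (xQ - u)|) * (ENNReal.ofReal B * IG) :=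
        lintegral_mul_const' _ _ (ENNReal.mul_ne_top ENNReal.ofReal_ne_top hIGtop)
    _ ≤ (ENNReal.ofReal Cφ * μB) * (ENNReal.ofReal B * (ENNReal.ofReal Cφ * μB)) := by
        gcongr
    _ ≤ ENNReal.ofReal ((C₁' + 1) * (5/4:ℝ) ^ q * (W + 1)^2 * P / D ^ q) := by
        rw [hμBV, ← ENNReal.ofReal_mul hCφ0, ← hWdef,
          ← ENNReal.ofReal_mul hB0, ← ENNReal.ofReal_mul hW0]
        apply ENNReal.ofReal_le_ofReal
        have hWinv : ((4/5:ℝ)^q)⁻¹ = (5/4:ℝ)^q := by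
          rw [← Real.inv_rpow (by norm_num)]
          norm_num
        have hsplit : ((4/5:ℝ)*D)^q = (4/5:ℝ)^q * D^q :=
          Real.mul_rpow (by norm_num) hD0.le
        have h45 : (0:ℝ) < (4/5:ℝ)^q := Real.rpow_pos_of_pos (by norm_num) _
        have hDq : (0:ℝ) < D^q := Real.rpow_pos_of_pos hD0 _
        have hcoef : W * (C₁' * W) ≤ (C₁' + 1) * (W + 1)^2 := by nlinarith
        calc W * (B * W) = (W * (C₁' * W)) * (P / ((4/5:ℝ)^q * D^q)) := by
              rw [hBdef, hsplit]; ring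
          _ ≤ ((C₁' + 1) * (W + 1)^2) * (P / ((4/5:ℝ)^q * D^q)) :=
              mul_le_mul_of_nonneg_right hcoef (by positivity)
          _ = (C₁' + 1) * (5/4:ℝ) ^ q * (W + 1)^2 * P / D ^ q := by
              rw [← hWinv]
              field_simp
end

section
/- Let n ≥ 1, let φ be a Schwartz function supported in the unit ball with Σ_{j∈ℤ}|φ̂(2^{−j}ξ)|² = 1 for all ξ ≠ 0 and ∫φ(x)x^α dx = 0 for all |α| ≤ M (M a sufficiently large integer), and write φ_k(x) = 2^{kn}φ(2^k x). Then for every sufficiently large integer N there is a constant C > 0 such that: for every k ∈ ℤ let 𝒟_k denote the dyadic cubes of side 2^{−k−N} and fix any point x_Q ∈ Q for each cube; then for every family of complex coefficients (c_Q)_{Q∈𝒟_k, k∈ℤ} with only finitely many nonzero entries, ‖ Σ_{k∈ℤ} Σ_{Q∈𝒟_k} |Q| c_Q φ_k(· − x_Q) ‖_{L²(ℝⁿ)} ≤ C ‖ (Σ_{k∈ℤ} Σ_{Q∈𝒟_k} |c_Q|² χ_Q)^{1/2} ‖_{L²(ℝⁿ)}. -/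
open MeasureTheory Filter Metric Set
open scoped ENNReal NNReal Topology FourierTransform

section AuxSynthesis
lemma eqv_apply {n : ℕ} (x : Rn n) (i : Fin n) :
    ((MeasurableEquiv.toLp 2 (Fin n → ℝ)).symm) x i = x i := rfl

variable {n : ℕ} {φ : Rn n → ℝ}

lemma ddil_small (hsupp : tsupport φ ⊆ Metric.closedBall 0 1) {k : ℤ} {y : Rn n}
    (hy : (2:ℝ)^(-k) < ‖y‖) : ddil n k φ y = 0 := by
  have h0 : φ ((2:ℝ)^k • y) = 0 := by
    by_contra h
    have : (2:ℝ)^k • y ∈ tsupport φ := subset_tsupport _ h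
    have h1 : ‖(2:ℝ)^k • y‖ ≤ 1 := by simpa [Metric.mem_closedBall] using hsupp this
    rw [norm_smul, Real.norm_eq_abs, abs_of_pos (by positivity : (0:ℝ) < (2:ℝ)^k)] at h1
    have h2 : (0:ℝ) < (2:ℝ)^k := by positivity
    have h3 : (2:ℝ)^k * (2:ℝ)^(-k) = 1 := by
      rw [← zpow_add₀ (by norm_num : (2:ℝ) ≠ 0)]; norm_num
    nlinarith
  simp [ddil, h0]

lemma ddil_ne_zero_norm_le (hsupp : tsupport φ ⊆ Metric.closedBall 0 1) {k : ℤ} {y : Rn n}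
    (hy : ddil n k φ y ≠ 0) : ‖y‖ ≤ (2:ℝ)^(-k) := by
  by_contra h
  exact hy (ddil_small hsupp (not_le.1 h))

lemma abs_ddil (k : ℤ) (y : Rn n) : |ddil n k φ y| = (2:ℝ)^(k*(n:ℤ)) * |φ ((2:ℝ)^k • y)| := by
  rw [ddil, abs_mul, abs_of_pos (by positivity : (0:ℝ) < (2:ℝ)^(k*(n:ℤ)))]

lemma int_dil (ψ : Rn n → ℝ) (k : ℤ) (a : Rn n) :
    ∫ x : Rn n, (2:ℝ)^(k*(n:ℤ)) * ψ ((2:ℝ)^k • (x - a)) = ∫ x, ψ x := by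
  rw [MeasureTheory.integral_const_mul]
  rw [integral_sub_right_eq_self (fun x => ψ ((2:ℝ)^k • x)) a]
  rw [MeasureTheory.Measure.integral_comp_smul_of_nonneg (volume : Measure (Rn n)) ψ ((2:ℝ)^k)
    (hR := by positivity)]
  rw [finrank_euclideanSpace_fin, smul_eq_mul, ← mul_assoc,
    ← zpow_natCast ((2:ℝ)^k) n, ← zpow_mul, ← zpow_neg,
    ← zpow_add₀ (by norm_num : (2:ℝ) ≠ 0)]
  simp

lemma int_ddil (k : ℤ) (a : Rn n) : ∫ x : Rn n, ddil n k φ (x - a) = ∫ x, φ x :=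
  int_dil φ k a

lemma int_abs_ddil (k : ℤ) (a : Rn n) : ∫ x : Rn n, |ddil n k φ (x - a)| = ∫ x, |φ x| := by
  have := int_dil (fun y => |φ y|) k a
  simp only [← abs_ddil] at this
  exact this

lemma cont_ddil (hc : Continuous φ) (k : ℤ) (a : Rn n) :
    Continuous fun x : Rn n => ddil n k φ (x - a) := by
  unfold ddil
  fun_prop

lemma hcs_ddil (hsupp : tsupport φ ⊆ Metric.closedBall 0 1) (k : ℤ) (a : Rn n) :
    HasCompactSupport fun x : Rn n => ddil n k φ (x - a) := by
  apply HasCompactSupport.intro (isCompact_closedBall a ((2:ℝ)^(-k)))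
  intro x hx
  apply ddil_small hsupp
  rw [Metric.mem_closedBall, not_le, dist_eq_norm] at hx
  exact hx

lemma integrable_ddil (hsupp : tsupport φ ⊆ Metric.closedBall 0 1) (hc : Continuous φ)
    (k : ℤ) (a : Rn n) : Integrable (fun x : Rn n => ddil n k φ (x - a)) volume :=
  (cont_ddil hc k a).integrable_of_hasCompactSupport (hcs_ddil hsupp k a)

lemma integrable_ddil_mul (hsupp : tsupport φ ⊆ Metric.closedBall 0 1) (hc : Continuous φ)
    (k l : ℤ) (a b : Rn n) :
    Integrable (fun x : Rn n => ddil n k φ (x - a) * ddil n l φ (x - b)) volume := by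
  apply Continuous.integrable_of_hasCompactSupport
  · exact (cont_ddil hc k a).mul (cont_ddil hc l b)
  · exact (hcs_ddil hsupp k a).mul_right

lemma cancel (hsupp : tsupport φ ⊆ Metric.closedBall 0 1) (hc : Continuous φ)
    (hint : ∫ x : Rn n, φ x = 0) {L : ℝ}
    (hL0 : 0 ≤ L) (hL : ∀ x y : Rn n, |φ x - φ y| ≤ L * ‖x - y‖) {k l : ℤ} (hkl : k ≤ l) (a b : Rn n) :
    |∫ x : Rn n, ddil n k φ (x - a) * ddil n l φ (x - b)| ≤
      (L * ∫ x : Rn n, |φ x|) * (2:ℝ)^(k*(n:ℤ)) * (2:ℝ)^(k - l) := by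
  set g := fun x : Rn n => ddil n k φ (x - a) with hg
  set h := fun x : Rn n => ddil n l φ (x - b) with hh
  have hinth : ∫ x, h x = 0 := by rw [hh, int_ddil l b]; exact hint
  have h1 : ∫ x : Rn n, g x * h x = ∫ x : Rn n, (g x - g b) * h x := by
    have e1 : Integrable (fun x : Rn n => g x * h x) volume :=
      integrable_ddil_mul hsupp hc k l a b
    have e2 : Integrable (fun x : Rn n => g b * h x) volume :=
      (integrable_ddil hsupp hc l b).const_mul (g b)
    have : ∫ x : Rn n, (g x - g b) * h x
        = (∫ x : Rn n, g x * h x) - ∫ x : Rn n, g b * h x := by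
      simp_rw [sub_mul]
      exact integral_sub e1 e2
    rw [this, MeasureTheory.integral_const_mul, hinth, mul_zero, sub_zero]
  rw [h1]
  have hB : ∀ x : Rn n, |(g x - g b) * h x| ≤
      ((L * (2:ℝ)^(k*(n:ℤ)) * (2:ℝ)^(k - l)) * |h x|) := by
    intro x
    rcases eq_or_ne (h x) 0 with h0 | h0
    · simp [h0]
    · have hxb : ‖x - b‖ ≤ (2:ℝ)^(-l) := ddil_ne_zero_norm_le hsupp h0
      have hgd : |g x - g b| ≤ L * (2:ℝ)^(k*(n:ℤ)) * (2:ℝ)^(k - l) := by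
        have : g x - g b = (2:ℝ)^(k*(n:ℤ)) *
            (φ ((2:ℝ)^k • (x - a)) - φ ((2:ℝ)^k • (b - a))) := by
          simp only [hg, ddil]; ring
        rw [this, abs_mul, abs_of_pos (by positivity : (0:ℝ) < (2:ℝ)^(k*(n:ℤ)))]
        have h2 : |φ ((2:ℝ)^k • (x - a)) - φ ((2:ℝ)^k • (b - a))| ≤
            L * ((2:ℝ)^k * ‖x - b‖) := by
          have := hL ((2:ℝ)^k • (x - a)) ((2:ℝ)^k • (b - a))
          rw [← smul_sub, show x - a - (b - a) = x - b by abel, norm_smul,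
            Real.norm_eq_abs, abs_of_pos (by positivity : (0:ℝ) < (2:ℝ)^k)] at this
          exact this
        have h3 : L * ((2:ℝ)^k * ‖x - b‖) ≤ L * ((2:ℝ)^k * (2:ℝ)^(-l)) := by
          apply mul_le_mul_of_nonneg_left _ hL0
          exact mul_le_mul_of_nonneg_left hxb (by positivity)
        calc (2:ℝ)^(k*(n:ℤ)) * |φ ((2:ℝ)^k • (x - a)) - φ ((2:ℝ)^k • (b - a))|
            ≤ (2:ℝ)^(k*(n:ℤ)) * (L * ((2:ℝ)^k * (2:ℝ)^(-l))) := by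
              apply mul_le_mul_of_nonneg_left (le_trans h2 h3) (by positivity)
          _ = L * (2:ℝ)^(k*(n:ℤ)) * (2:ℝ)^(k - l) := by
              rw [← zpow_add₀ (by norm_num : (2:ℝ) ≠ 0)]; ring_nf
      calc |(g x - g b) * h x| = |g x - g b| * |h x| := abs_mul _ _
        _ ≤ (L * (2:ℝ)^(k*(n:ℤ)) * (2:ℝ)^(k - l)) * |h x| :=
            mul_le_mul_of_nonneg_right hgd (abs_nonneg _)
  have habs : |∫ x : Rn n, (g x - g b) * h x| ≤ ∫ x : Rn n, |(g x - g b) * h x| := by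
    simpa [Real.norm_eq_abs, abs_mul] using
      MeasureTheory.norm_integral_le_integral_norm (μ := volume)
        (fun x : Rn n => (g x - g b) * h x)
  have hintegr : Integrable (fun x : Rn n => (g x - g b) * h x) volume := by
    simp_rw [sub_mul]
    exact (integrable_ddil_mul hsupp hc k l a b).sub
      ((integrable_ddil hsupp hc l b).const_mul (g b))
  have hmono : ∫ x : Rn n, |g x - g b| * |h x| ≤
      ∫ x : Rn n, (L * (2:ℝ)^(k*(n:ℤ)) * (2:ℝ)^(k - l)) * |h x| := by
    apply integral_mono (by simpa [abs_mul] using hintegr.abs) _ (fun x => by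
      simpa [abs_mul] using hB x)
    exact ((integrable_ddil hsupp hc l b).abs.const_mul _)
  have hval : ∫ x : Rn n, (L * (2:ℝ)^(k*(n:ℤ)) * (2:ℝ)^(k - l)) * |h x|
      = (L * ∫ x : Rn n, |φ x|) * (2:ℝ)^(k*(n:ℤ)) * (2:ℝ)^(k - l) := by
    rw [MeasureTheory.integral_const_mul, hh, int_abs_ddil l b]; ring
  calc |∫ x : Rn n, (g x - g b) * h x| ≤ ∫ x : Rn n, |g x - g b| * |h x| := by
        simpa [abs_mul] using habs
    _ ≤ _ := hmono
    _ = _ := hval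

lemma far_zero (hsupp : tsupport φ ⊆ Metric.closedBall 0 1) {k l : ℤ} {a b : Rn n}
    (hab : (2:ℝ)^(-k) + (2:ℝ)^(-l) < ‖a - b‖) :
    ∫ x : Rn n, ddil n k φ (x - a) * ddil n l φ (x - b) = 0 := by
  have : ∀ x : Rn n, ddil n k φ (x - a) * ddil n l φ (x - b) = 0 := by
    intro x
    rcases eq_or_ne (ddil n k φ (x - a)) 0 with h0 | h0
    · rw [h0, zero_mul]
    · have hxa : ‖x - a‖ ≤ (2:ℝ)^(-k) := ddil_ne_zero_norm_le hsupp h0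
      have : (2:ℝ)^(-l) < ‖x - b‖ := by
        have h4 : ‖a - b‖ ≤ ‖a - x‖ + ‖x - b‖ := by
          simpa using norm_add_le (a - x) (x - b)
        have h2 : ‖a - x‖ = ‖x - a‖ := norm_sub_rev a x
        rw [h2] at h4
        linarith
      rw [ddil_small hsupp this, mul_zero]
  simp [this]

lemma dcube_eq (m : ℤ) (v : Fin n → ℤ) :
    dcube n m v = ((MeasurableEquiv.toLp 2 (Fin n → ℝ)).symm) ⁻¹'
      (Set.univ.pi fun i => Set.Ico ((v i : ℝ) * (2:ℝ)^(-m)) (((v i : ℝ) + 1) * (2:ℝ)^(-m))) := by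
  ext x
  simp [dcube, Set.mem_pi, eqv_apply]

lemma measurableSet_dcube (m : ℤ) (v : Fin n → ℤ) : MeasurableSet (dcube n m v) := by
  rw [dcube_eq]
  exact ((MeasurableEquiv.toLp 2 (Fin n → ℝ)).symm).measurable
    (MeasurableSet.univ_pi fun i => measurableSet_Ico)

lemma volume_dcube (m : ℤ) (v : Fin n → ℤ) :
    volume (dcube n m v) = ENNReal.ofReal (((2:ℝ)^(-m))^n) := by
  rw [dcube_eq]
  rw [(EuclideanSpace.volume_preserving_symm_measurableEquiv_toLp (Fin n)).measure_preimage
    ((MeasurableSet.univ_pi fun i => measurableSet_Ico).nullMeasurableSet)]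
  rw [volume_pi_pi]
  have : ∀ i : Fin n, volume (Set.Ico ((v i : ℝ) * (2:ℝ)^(-m)) (((v i : ℝ) + 1) * (2:ℝ)^(-m)))
      = ENNReal.ofReal ((2:ℝ)^(-m)) := by
    intro i; rw [Real.volume_Ico]; ring_nf
  rw [Finset.prod_congr rfl (fun i _ => this i), Finset.prod_const]
  rw [← ENNReal.ofReal_pow (by positivity)]
  simp

lemma dcube_disjoint (m : ℤ) {v v' : Fin n → ℤ} (hvv : v ≠ v') :
    Disjoint (dcube n m v) (dcube n m v') := by
  rw [Set.disjoint_left]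
  intro x hx hx'
  apply hvv
  funext i
  have h1 := hx i
  have h2 := hx' i
  have hp : (0:ℝ) < (2:ℝ)^(-m) := by positivity
  by_contra hne
  rcases lt_or_gt_of_ne (fun h : (v i : ℝ) = (v' i : ℝ) => hne (by exact_mod_cast h)) with h | h
  · have : (v i : ℝ) + 1 ≤ (v' i : ℝ) := by
      have : (v i) < (v' i) := by exact_mod_cast h
      exact_mod_cast this
    nlinarith [h1.2, h2.1]
  · have : (v' i : ℝ) + 1 ≤ (v i : ℝ) := by
      have : (v' i) < (v i) := by exact_mod_cast h
      exact_mod_cast this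
    nlinarith [h1.1, h2.2]

lemma dcube_diam (m : ℤ) (v : Fin n → ℤ) {x y : Rn n}
    (hx : x ∈ dcube n m v) (hy : y ∈ dcube n m v) :
    ‖x - y‖ ≤ Real.sqrt n * (2:ℝ)^(-m) := by
  rw [EuclideanSpace.norm_eq]
  have hcoord : ∀ i, ‖(x - y) i‖ ^ 2 ≤ ((2:ℝ)^(-m))^2 := by
    intro i
    have h1 := hx i
    have h2 := hy i
    have : (x - y) i = x i - y i := rfl
    rw [this, Real.norm_eq_abs, sq_abs]
    nlinarith [h1.1, h1.2, h2.1, h2.2]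
  calc √(∑ i : Fin n, ‖(x - y) i‖ ^ 2) ≤ √(∑ _i : Fin n, ((2:ℝ)^(-m))^2) :=
        Real.sqrt_le_sqrt (Finset.sum_le_sum fun i _ => hcoord i)
    _ = Real.sqrt n * (2:ℝ)^(-m) := by
        rw [Finset.sum_const, Finset.card_univ, Fintype.card_fin, nsmul_eq_mul,
          Real.sqrt_mul (by positivity), Real.sqrt_sq (by positivity)]

lemma coord_le_norm (x : Rn n) (i : Fin n) : |x i| ≤ ‖x‖ := by
  rw [EuclideanSpace.norm_eq]
  have : |x i| = √(‖x i‖^2) := by rw [Real.sqrt_sq_eq_abs, Real.norm_eq_abs, abs_abs]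
  rw [this]
  apply Real.sqrt_le_sqrt
  exact Finset.single_le_sum (f := fun j => ‖x j‖^2) (fun j _ => by positivity)
    (Finset.mem_univ i)

lemma volume_closedBall_le (x : Rn n) {r : ℝ} (hr : 0 ≤ r) :
    volume (Metric.closedBall x r) ≤ ENNReal.ofReal ((2*r)^n) := by
  have hsub : Metric.closedBall x r ⊆ ((MeasurableEquiv.toLp 2 (Fin n → ℝ)).symm) ⁻¹'
      (Set.univ.pi fun i => Set.Icc (x i - r) (x i + r)) := by
    intro y hy
    rw [Metric.mem_closedBall, dist_eq_norm] at hy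
    intro i _
    have := (coord_le_norm (y - x) i).trans hy
    have hyx : (y - x) i = y i - x i := rfl
    rw [hyx, abs_le] at this
    rw [eqv_apply]
    constructor <;> [linarith [this.1]; linarith [this.2]]
  calc volume (Metric.closedBall x r) ≤ _ := measure_mono hsub
    _ = ENNReal.ofReal ((2*r)^n) := by
      rw [(EuclideanSpace.volume_preserving_symm_measurableEquiv_toLp (Fin n)).measure_preimage
        ((MeasurableSet.univ_pi fun i => measurableSet_Icc).nullMeasurableSet)]
      rw [volume_pi_pi]
      have : ∀ i : Fin n, volume (Set.Icc (x i - r) (x i + r)) = ENNReal.ofReal (2*r) := by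
        intro i; rw [Real.volume_Icc]; ring_nf
      rw [Finset.prod_congr rfl (fun i _ => this i), Finset.prod_const,
        ← ENNReal.ofReal_pow (by positivity)]
      simp

lemma half_pow_sum (T : Finset ℤ) (ι : ℤ → ℕ)
    (hι : ∀ a ∈ T, ∀ b ∈ T, ι a = ι b → a = b) :
    ∑ l ∈ T, ((2:ℝ)⁻¹) ^ (ι l) ≤ 2 := by
  rw [← Finset.sum_image (g := ι) (f := fun m => ((2:ℝ)⁻¹)^m) hι]
  have h1 : ∑ m ∈ T.image ι, ((2:ℝ)⁻¹)^m ≤ ∑' m : ℕ, ((2:ℝ)⁻¹)^m :=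
    (summable_geometric_of_lt_one (by norm_num) (by norm_num)).sum_le_tsum _
      (fun i _ => by positivity)
  rw [tsum_geometric_of_lt_one (by norm_num) (by norm_num),
    show (1 - (2:ℝ)⁻¹)⁻¹ = 2 by norm_num] at h1
  exact h1

lemma geom_abs_sum (K : Finset ℤ) (k : ℤ) : ∑ l ∈ K, (2:ℝ)^(-|l - k|) ≤ 4 := by
  have hterm : ∀ l : ℤ, (2:ℝ)^(-|l - k|) = ((2:ℝ)⁻¹) ^ ((l - k).natAbs) := by
    intro l
    rw [show -|l - k| = -(((l - k).natAbs : ℤ)) by rw [Int.abs_eq_natAbs],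
      zpow_neg, ← inv_zpow, zpow_natCast]
  rw [Finset.sum_congr rfl (fun l _ => hterm l)]
  rw [← Finset.sum_filter_add_sum_filter_not K (fun l => k ≤ l)]
  have h1 : ∑ l ∈ K.filter (fun l => k ≤ l), ((2:ℝ)⁻¹) ^ ((l - k).natAbs) ≤ 2 := by
    apply half_pow_sum
    intro a ha b hb hab
    simp only [Finset.mem_filter] at ha hb
    omega
  have h2 : ∑ l ∈ K.filter (fun l => ¬ k ≤ l), ((2:ℝ)⁻¹) ^ ((l - k).natAbs) ≤ 2 := by
    apply half_pow_sum
    intro a ha b hb hab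
    simp only [Finset.mem_filter] at ha hb
    omega
  linarith

lemma zpow_pow_n (a : ℤ) : ((2:ℝ)^a)^n = (2:ℝ)^(a*(n:ℤ)) := by
  rw [← zpow_natCast ((2:ℝ)^a) n, ← zpow_mul]

lemma level_sum (hsupp : tsupport φ ⊆ Metric.closedBall 0 1) (hc : Continuous φ)
    (hint : ∫ x : Rn n, φ x = 0) {L : ℝ} (hL0 : 0 ≤ L)
    (hL : ∀ x y : Rn n, |φ x - φ y| ≤ L * ‖x - y‖)
    (N : ℕ) (k l : ℤ) (x₀ : Rn n)
    (xp : (Fin n → ℤ) → Rn n) (hxp : ∀ v, xp v ∈ dcube n (l + N) v)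
    (F : Finset (Fin n → ℤ)) :
    ∑ v ∈ F, (2:ℝ)^(-(l+(N:ℤ))*(n:ℤ)) *
        |∫ x : Rn n, ddil n k φ (x - x₀) * ddil n l φ (x - xp v)| ≤
      ((L * ∫ x : Rn n, |φ x|) * (2*(2+Real.sqrt n))^n) * (2:ℝ)^(-|k - l|) := by
  set A := ∫ x : Rn n, |φ x| with hA
  have hA0 : 0 ≤ A := integral_nonneg (fun x => abs_nonneg _)
  set m := min k l with hm
  set B := (L * A) * (2:ℝ)^(m*(n:ℤ)) * (2:ℝ)^(-|k - l|) with hB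
  have hB0 : 0 ≤ B := by positivity
  -- uniform bound on the inner product
  have hJ : ∀ b : Rn n, |∫ x : Rn n, ddil n k φ (x - x₀) * ddil n l φ (x - b)| ≤ B := by
    intro b
    rcases le_total k l with hkl | hlk
    · have h := cancel hsupp hc hint hL0 hL hkl x₀ b
      rw [hB, hm, inf_eq_left.mpr hkl,
        show -|k - l| = k - l by rw [abs_of_nonpos (by omega : k - l ≤ 0)]; ring]
      exact h
    · have hswap : (∫ x : Rn n, ddil n k φ (x - x₀) * ddil n l φ (x - b))
          = ∫ x : Rn n, ddil n l φ (x - b) * ddil n k φ (x - x₀) := by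
        congr 1; funext x; ring
      rw [hswap]
      have h := cancel hsupp hc hint hL0 hL hlk b x₀
      rw [hB, hm, inf_eq_right.mpr hlk,
        show -|k - l| = l - k by rw [abs_of_nonneg (by omega : (0:ℤ) ≤ k - l)]; ring]
      exact h
  set R := (2:ℝ)^(-k) + (2:ℝ)^(-l) with hR
  set r := (2 + Real.sqrt n) * (2:ℝ)^(-m) with hr
  have hr0 : 0 ≤ r := by positivity
  have hmle : (2:ℝ)^(-(l+(N:ℤ))) ≤ (2:ℝ)^(-m) := by
    apply zpow_le_zpow_right₀ (by norm_num)
    omega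
  have hRle : R ≤ 2 * (2:ℝ)^(-m) := by
    rw [hR]
    have h1 : (2:ℝ)^(-k) ≤ (2:ℝ)^(-m) := zpow_le_zpow_right₀ (by norm_num) (by omega)
    have h2 : (2:ℝ)^(-l) ≤ (2:ℝ)^(-m) := zpow_le_zpow_right₀ (by norm_num) (by omega)
    linarith
  classical
  set F' := F.filter (fun v => ‖x₀ - xp v‖ ≤ R) with hF'
  -- each cube in F' is inside the closed ball of radius r around x₀
  have hsub : ∀ v ∈ F', dcube n (l+(N:ℤ)) v ⊆ Metric.closedBall x₀ r := by
    intro v hv y hy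
    simp only [hF', Finset.mem_filter] at hv
    rw [Metric.mem_closedBall, dist_eq_norm]
    have h1 : ‖y - xp v‖ ≤ Real.sqrt n * (2:ℝ)^(-(l+(N:ℤ))) :=
      dcube_diam _ _ hy (hxp v)
    have h3 : ‖y - x₀‖ ≤ ‖y - xp v‖ + ‖xp v - x₀‖ := by
      simpa using norm_add_le (y - xp v) (xp v - x₀)
    have h4 : ‖xp v - x₀‖ = ‖x₀ - xp v‖ := norm_sub_rev _ _
    have h5 : Real.sqrt n * (2:ℝ)^(-(l+(N:ℤ))) ≤ Real.sqrt n * (2:ℝ)^(-m) :=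
      mul_le_mul_of_nonneg_left hmle (Real.sqrt_nonneg n)
    rw [hr]
    have := hv.2
    nlinarith [Real.sqrt_nonneg (n:ℝ)]
  -- pointwise bound by an ite
  have hpt : ∀ v ∈ F, (2:ℝ)^(-(l+(N:ℤ))*(n:ℤ)) *
      |∫ x : Rn n, ddil n k φ (x - x₀) * ddil n l φ (x - xp v)| ≤
      (if ‖x₀ - xp v‖ ≤ R then (2:ℝ)^(-(l+(N:ℤ))*(n:ℤ)) * B else 0) := by
    intro v _
    by_cases hcase : ‖x₀ - xp v‖ ≤ R
    · rw [if_pos hcase]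
      exact mul_le_mul_of_nonneg_left (hJ (xp v)) (by positivity)
    · rw [if_neg hcase]
      rw [far_zero hsupp (by rw [← hR]; exact lt_of_not_ge hcase)]
      simp
  have hsum1 : ∑ v ∈ F, (2:ℝ)^(-(l+(N:ℤ))*(n:ℤ)) *
      |∫ x : Rn n, ddil n k φ (x - x₀) * ddil n l φ (x - xp v)| ≤
      ∑ v ∈ F', (2:ℝ)^(-(l+(N:ℤ))*(n:ℤ)) * B := by
    calc _ ≤ ∑ v ∈ F, (if ‖x₀ - xp v‖ ≤ R then (2:ℝ)^(-(l+(N:ℤ))*(n:ℤ)) * B else 0) :=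
          Finset.sum_le_sum hpt
      _ = _ := by rw [Finset.sum_filter]
  -- the volume bound
  have hvol : ∑ v ∈ F', (2:ℝ)^(-(l+(N:ℤ))*(n:ℤ)) ≤ (2*r)^n := by
    have heach : ∀ v : Fin n → ℤ, (2:ℝ)^(-(l+(N:ℤ))*(n:ℤ)) =
        (volume (dcube n (l+(N:ℤ)) v)).toReal := by
      intro v
      rw [volume_dcube, ENNReal.toReal_ofReal (by positivity), zpow_pow_n]
    calc ∑ v ∈ F', (2:ℝ)^(-(l+(N:ℤ))*(n:ℤ))
        = ∑ v ∈ F', (volume (dcube n (l+(N:ℤ)) v)).toReal :=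
          Finset.sum_congr rfl (fun v _ => heach v)
      _ = (∑ v ∈ F', volume (dcube n (l+(N:ℤ)) v)).toReal :=
          (ENNReal.toReal_sum (fun v _ => by
            rw [volume_dcube]; exact ENNReal.ofReal_ne_top)).symm
      _ = (volume (⋃ v ∈ F', dcube n (l+(N:ℤ)) v)).toReal := by
          rw [measure_biUnion_finset ?_ (fun v _ => measurableSet_dcube _ _)]
          · intro a _ b _ hab
            exact dcube_disjoint _ hab
      _ ≤ (volume (Metric.closedBall x₀ r)).toReal := by
          apply ENNReal.toReal_mono
          · exact (isCompact_closedBall x₀ r).measure_lt_top.ne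
          · exact measure_mono (Set.iUnion₂_subset hsub)
      _ ≤ (2*r)^n := by
          have := volume_closedBall_le x₀ hr0
          exact ENNReal.toReal_le_of_le_ofReal (by positivity) this
  -- put everything together
  have hfinal : ∑ v ∈ F', (2:ℝ)^(-(l+(N:ℤ))*(n:ℤ)) * B ≤ (2*r)^n * B := by
    rw [← Finset.sum_mul]
    exact mul_le_mul_of_nonneg_right hvol hB0
  have harith : (2*r)^n * B = ((L * A) * (2*(2+Real.sqrt n))^n) * (2:ℝ)^(-|k - l|) := by
    rw [hB, hr]
    have h1 : (2*((2 + Real.sqrt n) * (2:ℝ)^(-m)))^n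
        = (2*(2+Real.sqrt n))^n * ((2:ℝ)^(-m))^n := by
      rw [← mul_pow]; ring_nf
    rw [h1, zpow_pow_n]
    have h2 : (2:ℝ)^(-m*(n:ℤ)) * (2:ℝ)^(m*(n:ℤ)) = 1 := by
      rw [← zpow_add₀ (by norm_num : (2:ℝ) ≠ 0)]; simp
    calc (2*(2+Real.sqrt n))^n * (2:ℝ)^(-m*(n:ℤ)) *
          ((L * A) * (2:ℝ)^(m*(n:ℤ)) * (2:ℝ)^(-|k-l|))
        = ((L * A) * (2*(2+Real.sqrt n))^n) * (2:ℝ)^(-|k-l|) *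
            ((2:ℝ)^(-m*(n:ℤ)) * (2:ℝ)^(m*(n:ℤ))) := by ring
      _ = _ := by rw [h2, mul_one]
  calc _ ≤ _ := hsum1
    _ ≤ (2*r)^n * B := hfinal
    _ = _ := harith

lemma schur_bound (hsupp : tsupport φ ⊆ Metric.closedBall 0 1) (hc : Continuous φ)
    (hint : ∫ x : Rn n, φ x = 0) {L : ℝ} (hL0 : 0 ≤ L)
    (hL : ∀ x y : Rn n, |φ x - φ y| ≤ L * ‖x - y‖)
    (N : ℕ) (xQ : ℤ → (Fin n → ℤ) → Rn n)
    (hxQ : ∀ k v, xQ k v ∈ dcube n (k + (N:ℤ)) v)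
    (S : Finset (ℤ × (Fin n → ℤ))) (c : ℤ → (Fin n → ℤ) → ℂ) :
    ∫ x : Rn n, ‖∑ s ∈ S, (((2:ℝ)^(-(s.1+(N:ℤ))*(n:ℤ)) *
        ddil n s.1 φ (x - xQ s.1 s.2) : ℝ) : ℂ) * c s.1 s.2‖^2 ≤
      (4 * ((L * ∫ x : Rn n, |φ x|) * (2*(2+Real.sqrt n))^n)) *
        ∑ s ∈ S, ‖c s.1 s.2‖^2 * (2:ℝ)^(-(s.1+(N:ℤ))*(n:ℤ)) := by
  classical
  set A := ∫ x : Rn n, |φ x| with hA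
  have hA0 : 0 ≤ A := integral_nonneg (fun x => abs_nonneg _)
  set K0 := (L * A) * (2*(2+Real.sqrt n))^n with hK0
  have hK00 : 0 ≤ K0 := by positivity
  set w : ℤ × (Fin n → ℤ) → ℝ := fun s => (2:ℝ)^(-(s.1+(N:ℤ))*(n:ℤ)) with hw
  have hw0 : ∀ s, 0 < w s := fun s => by positivity
  set G : ℤ × (Fin n → ℤ) → Rn n → ℝ :=
    fun s x => w s * ddil n s.1 φ (x - xQ s.1 s.2) with hG
  set I : ℤ × (Fin n → ℤ) → ℤ × (Fin n → ℤ) → ℝ := fun s t =>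
    ∫ x : Rn n, ddil n s.1 φ (x - xQ s.1 s.2) * ddil n t.1 φ (x - xQ t.1 t.2) with hI
  set W : ℤ × (Fin n → ℤ) → ℤ × (Fin n → ℤ) → ℝ := fun s t => w s * w t * |I s t| with hW
  have hWsymm : ∀ s t, W s t = W t s := by
    intro s t
    simp only [hW, hI]
    rw [show (∫ x : Rn n, ddil n s.1 φ (x - xQ s.1 s.2) * ddil n t.1 φ (x - xQ t.1 t.2))
      = ∫ x : Rn n, ddil n t.1 φ (x - xQ t.1 t.2) * ddil n s.1 φ (x - xQ s.1 s.2) by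
        congr 1; funext x; ring]
    ring
  have hW0 : ∀ s t, 0 ≤ W s t := fun s t => by
    have := (hw0 s).le; have := (hw0 t).le
    exact mul_nonneg (mul_nonneg ‹_› ‹_›) (abs_nonneg _)
  -- key per-row bound
  have hrow : ∀ s ∈ S, ∑ t ∈ S, W s t ≤ (4 * K0) * w s := by
    intro s _
    have hfib : ∑ l ∈ S.image Prod.fst, ∑ t ∈ S.filter (fun t => t.1 = l), W s t
        = ∑ t ∈ S, W s t :=
      Finset.sum_fiberwise_of_maps_to (fun t ht => Finset.mem_image_of_mem _ ht) _
    rw [← hfib]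
    have hinner : ∀ l ∈ S.image Prod.fst,
        ∑ t ∈ S.filter (fun t => t.1 = l), W s t ≤ w s * (K0 * (2:ℝ)^(-|s.1 - l|)) := by
      intro l _
      set fib := S.filter (fun t : ℤ × (Fin n → ℤ) => t.1 = l) with hfibd
      have hsum_img : ∑ t ∈ fib, W s t
          = ∑ v ∈ fib.image Prod.snd, W s (l, v) := by
        rw [Finset.sum_image (fun a ha b hb hab => by
          simp only [hfibd, Finset.mem_coe, Finset.mem_filter] at ha hb
          exact Prod.ext (ha.2.trans hb.2.symm) hab)]
        apply Finset.sum_congr rfl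
        intro t ht
        simp only [hfibd, Finset.mem_filter] at ht
        have hte : (l, t.2) = t := Prod.ext ht.2.symm rfl
        rw [← hte]
      rw [hsum_img]
      have hls := level_sum hsupp hc hint hL0 hL N s.1 l (xQ s.1 s.2) (xQ l)
        (fun v => hxQ l v) (fib.image Prod.snd)
      have : ∑ v ∈ fib.image Prod.snd, W s (l, v)
          = w s * ∑ v ∈ fib.image Prod.snd, (2:ℝ)^(-(l+(N:ℤ))*(n:ℤ)) *
              |∫ x : Rn n, ddil n s.1 φ (x - xQ s.1 s.2) * ddil n l φ (x - xQ l v)| := by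
        rw [Finset.mul_sum]
        apply Finset.sum_congr rfl
        intro v _
        simp only [hW, hI, hw]
        ring
      rw [this]
      have hKabs : ((L * A) * (2*(2+Real.sqrt n))^n) * (2:ℝ)^(-|s.1 - l|)
          = K0 * (2:ℝ)^(-|s.1 - l|) := by rw [hK0]
      apply mul_le_mul_of_nonneg_left _ (hw0 s).le
      rw [← hKabs]
      exact hls
    calc ∑ l ∈ S.image Prod.fst, ∑ t ∈ S.filter (fun t => t.1 = l), W s t
        ≤ ∑ l ∈ S.image Prod.fst, w s * (K0 * (2:ℝ)^(-|s.1 - l|)) :=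
          Finset.sum_le_sum hinner
      _ = (w s * K0) * ∑ l ∈ S.image Prod.fst, (2:ℝ)^(-|l - s.1|) := by
          rw [Finset.mul_sum]
          apply Finset.sum_congr rfl
          intro l _
          rw [abs_sub_comm]
          ring
      _ ≤ (w s * K0) * 4 := by
          apply mul_le_mul_of_nonneg_left (geom_abs_sum _ _) (by positivity)
      _ = (4 * K0) * w s := by ring
  -- expansion of the square
  have hpoint : ∀ x : Rn n, ‖∑ s ∈ S, ((G s x : ℝ) : ℂ) * c s.1 s.2‖^2
      = ∑ s ∈ S, ∑ t ∈ S, (G s x * G t x) * (c s.1 s.2 * starRingEnd ℂ (c t.1 t.2)).re := by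
    intro x
    set z := ∑ s ∈ S, ((G s x : ℝ) : ℂ) * c s.1 s.2 with hz
    have h1 : (‖z‖^2 : ℝ) = (z * starRingEnd ℂ z).re := by
      rw [Complex.mul_conj, Complex.ofReal_re, ← Complex.sq_norm]
    rw [h1, hz]
    rw [map_sum, Finset.sum_mul_sum]
    rw [Complex.re_sum]
    apply Finset.sum_congr rfl
    intro s _
    rw [Complex.re_sum]
    apply Finset.sum_congr rfl
    intro t _
    have : ((G s x : ℝ) : ℂ) * c s.1 s.2 * (starRingEnd ℂ (((G t x : ℝ) : ℂ) * c t.1 t.2))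
        = ((G s x * G t x : ℝ) : ℂ) * (c s.1 s.2 * starRingEnd ℂ (c t.1 t.2)) := by
      rw [map_mul]
      push_cast
      rw [Complex.conj_ofReal]
      ring
    rw [this, Complex.re_ofReal_mul]
  -- integrability of each product
  have hintegrable : ∀ s t : ℤ × (Fin n → ℤ), Integrable (fun x : Rn n =>
      (G s x * G t x) * (c s.1 s.2 * starRingEnd ℂ (c t.1 t.2)).re) volume := by
    intro s t
    have : (fun x : Rn n => (G s x * G t x) * (c s.1 s.2 * starRingEnd ℂ (c t.1 t.2)).re)
        = fun x : Rn n => ((w s * w t) * (c s.1 s.2 * starRingEnd ℂ (c t.1 t.2)).re) *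
          (ddil n s.1 φ (x - xQ s.1 s.2) * ddil n t.1 φ (x - xQ t.1 t.2)) := by
      funext x; simp only [hG]; ring
    rw [this]
    exact (integrable_ddil_mul hsupp hc _ _ _ _).const_mul _
  -- integral of each product
  have hintval : ∀ s t : ℤ × (Fin n → ℤ), ∫ x : Rn n,
      (G s x * G t x) * (c s.1 s.2 * starRingEnd ℂ (c t.1 t.2)).re
      = ((w s * w t) * (c s.1 s.2 * starRingEnd ℂ (c t.1 t.2)).re) * I s t := by
    intro s t
    have : (fun x : Rn n => (G s x * G t x) * (c s.1 s.2 * starRingEnd ℂ (c t.1 t.2)).re)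
        = fun x : Rn n => ((w s * w t) * (c s.1 s.2 * starRingEnd ℂ (c t.1 t.2)).re) *
          (ddil n s.1 φ (x - xQ s.1 s.2) * ddil n t.1 φ (x - xQ t.1 t.2)) := by
      funext x; simp only [hG]; ring
    rw [this, MeasureTheory.integral_const_mul, hI]
  -- compute the integral of the square
  have hsq : ∫ x : Rn n, ‖∑ s ∈ S, ((G s x : ℝ) : ℂ) * c s.1 s.2‖^2
      = ∑ s ∈ S, ∑ t ∈ S,
          ((w s * w t) * (c s.1 s.2 * starRingEnd ℂ (c t.1 t.2)).re) * I s t := by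
    rw [show (fun x : Rn n => ‖∑ s ∈ S, ((G s x : ℝ) : ℂ) * c s.1 s.2‖^2)
        = fun x : Rn n => ∑ s ∈ S, ∑ t ∈ S,
            (G s x * G t x) * (c s.1 s.2 * starRingEnd ℂ (c t.1 t.2)).re from
      funext hpoint]
    rw [MeasureTheory.integral_finset_sum _ (fun s _ =>
      MeasureTheory.integrable_finset_sum _ (fun t _ => hintegrable s t))]
    apply Finset.sum_congr rfl
    intro s _
    rw [MeasureTheory.integral_finset_sum _ (fun t _ => hintegrable s t)]
    exact Finset.sum_congr rfl fun t _ => hintval s t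
  rw [hsq]
  -- bound the double sum
  have hterm : ∀ s ∈ S, ∀ t ∈ S,
      ((w s * w t) * (c s.1 s.2 * starRingEnd ℂ (c t.1 t.2)).re) * I s t ≤
        (‖c s.1 s.2‖^2 + ‖c t.1 t.2‖^2)/2 * W s t := by
    intro s _ t _
    have h1 : ((w s * w t) * (c s.1 s.2 * starRingEnd ℂ (c t.1 t.2)).re) * I s t ≤
        |((w s * w t) * (c s.1 s.2 * starRingEnd ℂ (c t.1 t.2)).re) * I s t| :=
      le_abs_self _
    have h2 : |((w s * w t) * (c s.1 s.2 * starRingEnd ℂ (c t.1 t.2)).re) * I s t|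
        = (w s * w t) * |(c s.1 s.2 * starRingEnd ℂ (c t.1 t.2)).re| * |I s t| := by
      rw [abs_mul, abs_mul, abs_of_pos (mul_pos (hw0 s) (hw0 t))]
    have h3 : |(c s.1 s.2 * starRingEnd ℂ (c t.1 t.2)).re| ≤ ‖c s.1 s.2‖ * ‖c t.1 t.2‖ := by
      calc |(c s.1 s.2 * starRingEnd ℂ (c t.1 t.2)).re|
          ≤ ‖c s.1 s.2 * starRingEnd ℂ (c t.1 t.2)‖ := Complex.abs_re_le_norm _
        _ = ‖c s.1 s.2‖ * ‖c t.1 t.2‖ := by rw [norm_mul, RCLike.norm_conj]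
    have h4 : ‖c s.1 s.2‖ * ‖c t.1 t.2‖ ≤ (‖c s.1 s.2‖^2 + ‖c t.1 t.2‖^2)/2 := by
      nlinarith [sq_nonneg (‖c s.1 s.2‖ - ‖c t.1 t.2‖)]
    calc ((w s * w t) * (c s.1 s.2 * starRingEnd ℂ (c t.1 t.2)).re) * I s t
        ≤ (w s * w t) * |(c s.1 s.2 * starRingEnd ℂ (c t.1 t.2)).re| * |I s t| := by
          rw [← h2]; exact h1
      _ ≤ (w s * w t) * (‖c s.1 s.2‖ * ‖c t.1 t.2‖) * |I s t| := by
          apply mul_le_mul_of_nonneg_right _ (abs_nonneg _)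
          exact mul_le_mul_of_nonneg_left h3 (mul_pos (hw0 s) (hw0 t)).le
      _ ≤ (w s * w t) * ((‖c s.1 s.2‖^2 + ‖c t.1 t.2‖^2)/2) * |I s t| := by
          apply mul_le_mul_of_nonneg_right _ (abs_nonneg _)
          exact mul_le_mul_of_nonneg_left h4 (mul_pos (hw0 s) (hw0 t)).le
      _ = (‖c s.1 s.2‖^2 + ‖c t.1 t.2‖^2)/2 * W s t := by
          rw [hW]; ring
  have hdouble : ∑ s ∈ S, ∑ t ∈ S,
      ((w s * w t) * (c s.1 s.2 * starRingEnd ℂ (c t.1 t.2)).re) * I s t ≤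
      ∑ s ∈ S, ∑ t ∈ S, (‖c s.1 s.2‖^2 + ‖c t.1 t.2‖^2)/2 * W s t :=
    Finset.sum_le_sum fun s hs => Finset.sum_le_sum fun t ht => hterm s hs t ht
  have hsymmstep : ∑ s ∈ S, ∑ t ∈ S, (‖c s.1 s.2‖^2 + ‖c t.1 t.2‖^2)/2 * W s t
      = ∑ s ∈ S, ‖c s.1 s.2‖^2 * ∑ t ∈ S, W s t := by
    have expand : ∀ s t : ℤ × (Fin n → ℤ), (‖c s.1 s.2‖^2 + ‖c t.1 t.2‖^2)/2 * W s t
        = ‖c s.1 s.2‖^2/2 * W s t + ‖c t.1 t.2‖^2/2 * W s t := by intro s t; ring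
    simp_rw [expand, Finset.sum_add_distrib]
    have hswap : ∑ s ∈ S, ∑ t ∈ S, ‖c t.1 t.2‖^2/2 * W s t
        = ∑ s ∈ S, ∑ t ∈ S, ‖c s.1 s.2‖^2/2 * W s t := by
      rw [Finset.sum_comm]
      apply Finset.sum_congr rfl
      intro s _
      apply Finset.sum_congr rfl
      intro t _
      rw [hWsymm t s]
    rw [hswap]
    rw [← Finset.sum_add_distrib]
    apply Finset.sum_congr rfl
    intro s _
    rw [← Finset.sum_add_distrib, Finset.mul_sum]
    apply Finset.sum_congr rfl
    intro t _
    ring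
  have hfinalrow : ∑ s ∈ S, ‖c s.1 s.2‖^2 * ∑ t ∈ S, W s t ≤
      ∑ s ∈ S, ‖c s.1 s.2‖^2 * ((4 * K0) * w s) := by
    apply Finset.sum_le_sum
    intro s hs
    exact mul_le_mul_of_nonneg_left (hrow s hs) (by positivity)
  calc ∑ s ∈ S, ∑ t ∈ S,
        ((w s * w t) * (c s.1 s.2 * starRingEnd ℂ (c t.1 t.2)).re) * I s t
      ≤ _ := hdouble
    _ = _ := hsymmstep
    _ ≤ _ := hfinalrow
    _ = (4 * K0) * ∑ s ∈ S, ‖c s.1 s.2‖^2 * w s := by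
        rw [Finset.mul_sum]; apply Finset.sum_congr rfl; intro s _; ring

lemma hasCompactSupport_finset_sum {ι α β : Type*} [TopologicalSpace α] [T2Space α]
    [AddCommMonoid β] (s : Finset ι) (f : ι → α → β)
    (h : ∀ i ∈ s, HasCompactSupport (f i)) :
    HasCompactSupport fun x => ∑ i ∈ s, f i x := by
  apply HasCompactSupport.intro (K := ⋃ i ∈ s, tsupport (f i))
  · exact s.finite_toSet.isCompact_biUnion (fun i hi => h i hi)
  · intro x hx
    apply Finset.sum_eq_zero
    intro i hi
    exact image_eq_zero_of_notMem_tsupport fun hmem => hx (Set.mem_biUnion hi hmem)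

lemma tsum_prod_finite {β : Type*} [AddCommMonoid β] [TopologicalSpace β] [T2Space β]
    (F : ℤ → (Fin n → ℤ) → β) (S : Finset (ℤ × (Fin n → ℤ)))
    (hF : ∀ k v, (k, v) ∉ S → F k v = 0) :
    ∑' (k : ℤ) (v : Fin n → ℤ), F k v = ∑ s ∈ S, F s.1 s.2 := by
  classical
  have hinner : ∀ k : ℤ, ∑' v, F k v = ∑ v ∈ S.image Prod.snd, F k v := by
    intro k
    apply tsum_eq_sum
    intro v hv
    apply hF k v
    intro hin
    exact hv (Finset.mem_image_of_mem _ hin)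
  rw [tsum_congr hinner]
  rw [tsum_eq_sum (s := S.image Prod.fst) (f := fun k => ∑ v ∈ S.image Prod.snd, F k v)
    (fun k hk => Finset.sum_eq_zero fun v _ => hF k v
      (fun hin => hk (Finset.mem_image_of_mem _ hin)))]
  rw [← Finset.sum_product']
  symm
  apply Finset.sum_subset
  · intro p hp
    exact Finset.mem_product.2 ⟨Finset.mem_image_of_mem _ hp, Finset.mem_image_of_mem _ hp⟩
  · intro p _ hnp
    exact hF p.1 p.2 hnp

lemma schwartz_lipschitz (ψ : SchwartzMap (Rn n) ℝ) :
    ∃ L : ℝ, 0 ≤ L ∧ ∀ x y : Rn n, |ψ x - ψ y| ≤ L * ‖x - y‖ := by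
  obtain ⟨C, hC0, hC⟩ := ψ.decay 0 1
  refine ⟨C, hC0.le, ?_⟩
  intro x y
  have hfd : ∀ z : Rn n, ‖fderiv ℝ (⇑ψ) z‖₊ ≤ C.toNNReal := by
    intro z
    have h1 := hC z
    rw [pow_zero, one_mul] at h1
    have h2 : ‖fderiv ℝ (⇑ψ) z‖ = ‖iteratedFDeriv ℝ 1 (⇑ψ) z‖ := by
      rw [← norm_iteratedFDeriv_fderiv (n := 0), norm_iteratedFDeriv_zero]
    rw [← NNReal.coe_le_coe, coe_nnnorm, Real.coe_toNNReal _ hC0.le, h2]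
    exact h1
  have hlip := lipschitzWith_of_nnnorm_fderiv_le ψ.differentiable hfd
  have := hlip.dist_le_mul x y
  rw [Real.dist_eq, dist_eq_norm, Real.coe_toNNReal _ hC0.le] at this
  exact this

lemma volume_dcube_toReal (m : ℤ) (v : Fin n → ℤ) :
    (volume (dcube n m v)).toReal = (2:ℝ)^(-m*(n:ℤ)) := by
  rw [volume_dcube, ENNReal.toReal_ofReal (by positivity), zpow_pow_n]

lemma eLpNorm_two_eq {E : Type*} [NormedAddCommGroup E] (f : Rn n → E)
    (hm : AEStronglyMeasurable f volume)
    (hfi : Integrable (fun x => ‖f x‖^2) volume) :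
    eLpNorm f 2 volume = ENNReal.ofReal ((∫ x : Rn n, ‖f x‖^2) ^ (1/2:ℝ)) := by
  rw [eLpNorm_eq_lintegral_rpow_enorm_toReal (by norm_num) (by norm_num)]
  have hp : (2 : ℝ≥0∞).toReal = (2:ℝ) := by norm_num
  rw [hp]
  have h1 : ∀ x : Rn n, (‖f x‖ₑ)^(2:ℝ) = ENNReal.ofReal (‖f x‖^2) := by
    intro x
    rw [← ofReal_norm_eq_enorm, ENNReal.ofReal_rpow_of_nonneg (norm_nonneg _) (by norm_num)]
    congr 1
    rw [show (2:ℝ) = ((2:ℕ):ℝ) by norm_num, Real.rpow_natCast]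
  rw [lintegral_congr h1,
    ← ofReal_integral_eq_lintegral_ofReal hfi (Filter.Eventually.of_forall fun x => by positivity)]
  rw [ENNReal.ofReal_rpow_of_nonneg (integral_nonneg fun x => by positivity) (by norm_num)]

end AuxSynthesis

/-- the discrete Littlewood–Paley synthesis estimate
`‖Σ_{k,Q} |Q| c_Q φ_k(·-x_Q)‖_{L²} ≤ C ‖(Σ_{k,Q} |c_Q|² χ_Q)^{1/2}‖_{L²}`. -/
theorem discrete_synthesis_estimate
    (n : ℕ) (hn : 1 ≤ n) :
    ∃ N₁ : ℕ, ∀ M N : ℕ, N₁ ≤ M → N₁ ≤ N →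
      ∀ φ : SchwartzMap (Rn n) ℝ, tsupport ⇑φ ⊆ Metric.closedBall 0 1 → LPcond n ⇑φ →
        momentsVanish n ⇑φ M →
        ∃ C : ℝ≥0∞, 0 < C ∧ C < ⊤ ∧
          ∀ xQ : ℤ → (Fin n → ℤ) → Rn n, (∀ k v, xQ k v ∈ dcube n (k + N) v) →
          ∀ c : ℤ → (Fin n → ℤ) → ℂ,
            (Function.support fun kv : ℤ × (Fin n → ℤ) => c kv.1 kv.2).Finite →
            eLpNorm (fun x => ∑' (k : ℤ) (v : Fin n → ℤ),
                (((2 : ℝ) ^ (-(k + (N : ℤ)) * (n : ℤ)) * ddil n k ⇑φ (x - xQ k v) : ℝ) : ℂ) *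
                  c k v) 2 volume ≤
              C * eLpNorm (fun x => Real.sqrt (∑' (k : ℤ) (v : Fin n → ℤ),
                ‖c k v‖ ^ 2 * (dcube n (k + N) v).indicator (fun _ => (1 : ℝ)) x)) 2
                volume := by
  classical
  refine ⟨1, ?_⟩
  intro M N _hM _hN φ hsupp _hLP hmom
  have hφc : Continuous ⇑φ := φ.continuous
  obtain ⟨L, hL0, hL⟩ := schwartz_lipschitz φ
  have hint : ∫ x : Rn n, φ x = 0 := by
    have h0 := hmom (fun _ => 0) (by simp)
    simpa [monomial] using h0
  set A := ∫ x : Rn n, |φ x| with hA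
  have hA0 : 0 ≤ A := integral_nonneg fun x => abs_nonneg _
  set C₂ : ℝ := 4 * ((L * A) * (2*(2+Real.sqrt n))^n) with hC₂
  have hC₂0 : 0 ≤ C₂ := by positivity
  refine ⟨ENNReal.ofReal ((C₂+1) ^ (1/2:ℝ)), ?_, ENNReal.ofReal_lt_top, ?_⟩
  · rw [ENNReal.ofReal_pos]
    positivity
  intro xQ hxQ c hcfin
  set S : Finset (ℤ × (Fin n → ℤ)) := hcfin.toFinset with hSdef
  have hS : ∀ k v, (k, v) ∉ S → c k v = 0 := by
    intro k v h
    by_contra hne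
    exact h (hcfin.mem_toFinset.2 hne)
  set w : ℤ × (Fin n → ℤ) → ℝ := fun s => (2:ℝ)^(-(s.1+(N:ℤ))*(n:ℤ)) with hw
  have hw0 : ∀ s, 0 < w s := fun s => by positivity
  set f : Rn n → ℂ := fun x =>
    ∑ s ∈ S, (((2:ℝ)^(-(s.1+(N:ℤ))*(n:ℤ)) * ddil n s.1 ⇑φ (x - xQ s.1 s.2) : ℝ) : ℂ) *
      c s.1 s.2 with hf
  set SS : Rn n → ℝ := fun x =>
    ∑ s ∈ S, ‖c s.1 s.2‖^2 * (dcube n (s.1+(N:ℤ)) s.2).indicator (fun _ => (1:ℝ)) x with hSS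
  set T : ℝ := ∑ s ∈ S, ‖c s.1 s.2‖^2 * w s with hT
  have hT0 : 0 ≤ T := Finset.sum_nonneg fun s _ => by positivity
  -- identify the LHS function with the finite sum
  have hfeq : (fun x : Rn n => ∑' (k : ℤ) (v : Fin n → ℤ),
      (((2 : ℝ) ^ (-(k + (N : ℤ)) * (n : ℤ)) * ddil n k ⇑φ (x - xQ k v) : ℝ) : ℂ) *
        c k v) = f := by
    funext x
    exact tsum_prod_finite
      (fun k v => (((2 : ℝ) ^ (-(k + (N : ℤ)) * (n : ℤ)) * ddil n k ⇑φ (x - xQ k v) : ℝ) : ℂ) *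
        c k v) S (fun k v h => by simp [hS k v h])
  have hgeq : (fun x : Rn n => Real.sqrt (∑' (k : ℤ) (v : Fin n → ℤ),
      ‖c k v‖ ^ 2 * (dcube n (k + N) v).indicator (fun _ => (1 : ℝ)) x))
      = fun x => Real.sqrt (SS x) := by
    funext x
    congr 1
    exact tsum_prod_finite
      (fun k v => ‖c k v‖ ^ 2 * (dcube n (k + (N:ℤ)) v).indicator (fun _ => (1 : ℝ)) x) S
      (fun k v h => by simp [hS k v h])
  rw [hfeq, hgeq]
  -- the Schur bound
  have hquad : ∫ x : Rn n, ‖f x‖^2 ≤ C₂ * T := by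
    rw [hC₂, hT]
    exact schur_bound hsupp hφc hint hL0 hL N xQ hxQ S c
  -- integrability and measurability facts for f
  have hfcont : Continuous f := by
    apply continuous_finset_sum
    intro s _
    exact (Complex.continuous_ofReal.comp
      (continuous_const.mul (cont_ddil hφc s.1 (xQ s.1 s.2)))).mul continuous_const
  have hfcs : HasCompactSupport f := by
    apply hasCompactSupport_finset_sum
    intro s _
    exact HasCompactSupport.comp_left
      (g := fun r : ℝ => (((2:ℝ)^(-(s.1+(N:ℤ))*(n:ℤ)) * r : ℝ) : ℂ) * c s.1 s.2)
      (hcs_ddil hsupp s.1 (xQ s.1 s.2)) (by simp)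
  have hf2int : Integrable (fun x : Rn n => ‖f x‖^2) volume := by
    apply Continuous.integrable_of_hasCompactSupport
    · exact (hfcont.norm).pow 2
    · exact HasCompactSupport.comp_left (g := fun z : ℂ => ‖z‖^2) hfcs (by simp)
  -- the RHS function
  have hSS0 : ∀ x, 0 ≤ SS x := by
    intro x
    apply Finset.sum_nonneg
    intro s _
    apply mul_nonneg (by positivity)
    unfold Set.indicator
    split <;> norm_num
  have hSSmeas : Measurable SS := by
    apply Finset.measurable_sum
    intro s _
    exact (measurable_const.indicator (measurableSet_dcube _ _)).const_mul _
  have hSSint : Integrable SS volume := by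
    apply MeasureTheory.integrable_finset_sum
    intro s _
    apply Integrable.const_mul
    rw [integrable_indicator_iff (measurableSet_dcube _ _)]
    refine integrableOn_const ?_
    rw [volume_dcube]
    exact ENNReal.ofReal_ne_top
  have hsqrtSS : ∀ x : Rn n, ‖Real.sqrt (SS x)‖^2 = SS x := by
    intro x
    rw [Real.norm_eq_abs, sq_abs, Real.sq_sqrt (hSS0 x)]
  have hintSS : ∫ x : Rn n, SS x = T := by
    rw [hSS, hT, MeasureTheory.integral_finset_sum _ (fun s _ =>
      (by
        apply Integrable.const_mul
        rw [integrable_indicator_iff (measurableSet_dcube _ _)]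
        refine integrableOn_const ?_
        rw [volume_dcube]
        exact ENNReal.ofReal_ne_top))]
    apply Finset.sum_congr rfl
    intro s _
    rw [MeasureTheory.integral_const_mul,
      integral_indicator_const (1:ℝ) (measurableSet_dcube _ _), smul_eq_mul, mul_one,
      measureReal_def, volume_dcube_toReal]
  -- compute both eLpNorms
  have hLnorm : eLpNorm f 2 volume = ENNReal.ofReal ((∫ x : Rn n, ‖f x‖^2) ^ (1/2:ℝ)) :=
    eLpNorm_two_eq f hfcont.aestronglyMeasurable hf2int
  have hRnorm : eLpNorm (fun x => Real.sqrt (SS x)) 2 volume = ENNReal.ofReal (T ^ (1/2:ℝ)) := by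
    rw [eLpNorm_two_eq (fun x => Real.sqrt (SS x))
      ((hSSmeas.sqrt).aestronglyMeasurable)
      (by
        have : (fun x : Rn n => ‖Real.sqrt (SS x)‖^2) = SS := funext hsqrtSS
        rw [this]
        exact hSSint)]
    have h3 : (∫ x : Rn n, ‖Real.sqrt (SS x)‖^2) = T := by
      rw [← hintSS]
      exact integral_congr_ae (Filter.Eventually.of_forall fun x => hsqrtSS x)
    rw [h3]
  rw [hLnorm, hRnorm]
  rw [← ENNReal.ofReal_mul (by positivity)]
  apply ENNReal.ofReal_le_ofReal
  have h1 : ∫ x : Rn n, ‖f x‖^2 ≤ (C₂+1) * T := by nlinarith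
  have h2 : (∫ x : Rn n, ‖f x‖^2) ^ (1/2:ℝ) ≤ ((C₂+1) * T) ^ (1/2:ℝ) :=
    Real.rpow_le_rpow (integral_nonneg fun x => by positivity) h1 (by norm_num)
  rw [Real.mul_rpow (by positivity) hT0] at h2
  exact h2
end
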